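/- Let G be a second countable locally compact topological group with left Haar measure μ, let H be a complex separable Hilbert space, and let π be a strongly continuous unitary representation of G on H. Let φ ∈ H be an admissible vector, i.e. for every ψ ∈ H the function W_φψ : x ↦ ⟨ψ, π(x)φ⟩ lies in L²(G, μ) and ∫_G |⟨ψ, π(x)φ⟩|² dμ(x) = ‖ψ‖². Let Γ ⊆ G be a countable subset such that the family (π(γ)φ)_{γ∈Γ} is a Parseval frame for H. Then for every ψ ∈ H and every x ∈ G, the series ∑_{γ∈Γ} W_φψ(γ) · W_φφ(γ^{-1}x) converges absolutely and equals W_φψ(x); moreover the reconstruction series converges to W_φψ in the norm of L²(G, μ). In particular W_φ(H) is a Γ-sampling space with sinc-type function S = W_φφ. -/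

import Mathlib

open MeasureTheory Filter
open scoped ENNReal Topology

noncomputable section

/-! A Parseval frame `(f i)` makes the analysis operator `ψ ↦ (⟪f i, ψ⟫)ᵢ` an isometry into `ℓ²`,
so its adjoint is a left inverse and `ψ = ∑ ⟪f i, ψ⟫ • f i` in norm. Pairing this expansion with
`π x φ` and using `⟪π γ φ, π x φ⟫ = ⟪φ, π (γ⁻¹ x) φ⟫` gives the pointwise reconstruction, absolutely
convergent because `|a b| ≤ |a|² + |b|²` and both coefficient sequences are in `ℓ²`. Admissibility
makes `W_φ` an isometry into `L²(G)`, so the `L²` error of a partial sum is the norm in `H` of the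
corresponding remainder of the frame expansion. -/

open scoped InnerProductSpace InnerProduct

section

variable (𝕜 : Type*) {ι H : Type*} [RCLike 𝕜] [NormedAddCommGroup H] [InnerProductSpace 𝕜 H]

def IsParsevalFrame (f : ι → H) : Prop :=
  ∀ ψ : H, ∑' i, ‖⟪ψ, f i⟫_𝕜‖ ^ 2 = ‖ψ‖ ^ 2

variable {𝕜}

namespace IsParsevalFrame

variable {f : ι → H}

theorem summable_norm_inner_sq (hf : IsParsevalFrame 𝕜 f) (ψ : H) :
    Summable fun i => ‖⟪ψ, f i⟫_𝕜‖ ^ 2 := by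
  by_contra h
  have hψ : ψ = 0 := by simpa [tsum_eq_zero_of_not_summable h] using (hf ψ).symm
  exact h (by simp [hψ])

theorem memℓp_inner (hf : IsParsevalFrame 𝕜 f) (ψ : H) : Memℓp (fun i => ⟪f i, ψ⟫_𝕜) 2 :=
  memℓp_gen <| by simpa [norm_inner_symm] using hf.summable_norm_inner_sq ψ

def analysisOperator (hf : IsParsevalFrame 𝕜 f) : H →ₗᵢ[𝕜] lp (fun _ : ι => 𝕜) 2 where
  toFun ψ := ⟨fun i => ⟪f i, ψ⟫_𝕜, hf.memℓp_inner ψ⟩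
  map_add' ψ χ := lp.ext <| funext fun i => inner_add_right _ _ _
  map_smul' c ψ := lp.ext <| funext fun i => inner_smul_right _ _ _
  norm_map' ψ := by
    refine (pow_left_inj₀ (norm_nonneg _) (norm_nonneg _) two_ne_zero).mp ?_
    have := lp.norm_rpow_eq_tsum (p := 2) (by norm_num) ⟨fun i => ⟪f i, ψ⟫_𝕜, hf.memℓp_inner ψ⟩
    simp only [ENNReal.toReal_ofNat, Real.rpow_two] at this
    simpa [this, norm_inner_symm] using hf ψ

@[simp]
theorem analysisOperator_apply (hf : IsParsevalFrame 𝕜 f) (ψ : H) (i : ι) :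
    hf.analysisOperator ψ i = ⟪f i, ψ⟫_𝕜 :=
  rfl

theorem summable_norm_inner_mul_inner (hf : IsParsevalFrame 𝕜 f) (ψ χ : H) :
    Summable fun i => ‖⟪ψ, f i⟫_𝕜 * ⟪f i, χ⟫_𝕜‖ := by
  refine .of_nonneg_of_le (fun _ => norm_nonneg _) (fun i => ?_)
    ((hf.summable_norm_inner_sq ψ).add (hf.summable_norm_inner_sq χ))
  rw [norm_mul, norm_inner_symm (f i)]
  linarith [two_mul_le_add_sq ‖⟪ψ, f i⟫_𝕜‖ ‖⟪χ, f i⟫_𝕜‖,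
    mul_nonneg (norm_nonneg ⟪ψ, f i⟫_𝕜) (norm_nonneg ⟪χ, f i⟫_𝕜)]

variable [CompleteSpace H]

def synthesisOperator (hf : IsParsevalFrame 𝕜 f) : lp (fun _ : ι => 𝕜) 2 →L[𝕜] H :=
  hf.analysisOperator.toContinuousLinearMap†

theorem synthesisOperator_analysisOperator (hf : IsParsevalFrame 𝕜 f) (ψ : H) :
    hf.synthesisOperator (hf.analysisOperator ψ) = ψ :=
  ext_inner_left 𝕜 fun χ => by
    rw [synthesisOperator, ContinuousLinearMap.adjoint_inner_right]
    exact hf.analysisOperator.inner_map_map χ ψ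

theorem synthesisOperator_single [DecidableEq ι] (hf : IsParsevalFrame 𝕜 f) (i : ι) (c : 𝕜) :
    hf.synthesisOperator (lp.single 2 i c) = c • f i :=
  ext_inner_left 𝕜 fun χ => by
    rw [synthesisOperator, ContinuousLinearMap.adjoint_inner_right, inner_smul_right]
    simp [lp.inner_single_right]

theorem hasSum_inner_smul (hf : IsParsevalFrame 𝕜 f) (ψ : H) :
    HasSum (fun i => ⟪f i, ψ⟫_𝕜 • f i) ψ := by
  classical
  have := (lp.hasSum_single ENNReal.ofNat_ne_top (hf.analysisOperator ψ)).mapL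
    hf.synthesisOperator
  simpa [synthesisOperator_single, synthesisOperator_analysisOperator] using this

theorem hasSum_inner_mul_inner (hf : IsParsevalFrame 𝕜 f) (ψ χ : H) :
    HasSum (fun i => ⟪ψ, f i⟫_𝕜 * ⟪f i, χ⟫_𝕜) ⟪ψ, χ⟫_𝕜 := by
  simpa [inner_smul_right, mul_comm] using (hf.hasSum_inner_smul χ).mapL (innerSL 𝕜 ψ)

end IsParsevalFrame

theorem inner_apply_inv_mul_apply {G : Type*} [Group G] (π : G →* (H ≃ₗᵢ[𝕜] H)) (φ : H)
    (g x : G) : ⟪φ, π (g⁻¹ * x) φ⟫_𝕜 = ⟪π g φ, π x φ⟫_𝕜 := by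
  rw [← (π g).inner_map_map]
  congr 1
  simp [map_mul]

end

theorem MeasureTheory.MemLp.eLpNorm_two_eq_ofReal {α E : Type*} [MeasurableSpace α]
    {μ : Measure α} [NormedAddCommGroup E] {g : α → E} (hg : MemLp g 2 μ) {c : ℝ} (hc : 0 ≤ c)
    (h : ∫ x, ‖g x‖ ^ 2 ∂μ = c ^ 2) : eLpNorm g 2 μ = ENNReal.ofReal c := by
  rw [hg.eLpNorm_eq_integral_rpow_norm two_ne_zero ENNReal.ofNat_ne_top]
  simp only [ENNReal.toReal_ofNat, Real.rpow_two, h]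
  rw [← one_div, ← Real.sqrt_eq_rpow, Real.sqrt_sq hc]

theorem sampling_reconstruction_of_parseval_frame_general
    {G : Type*} [Group G]
    [MeasurableSpace G]
    (μ : Measure G)
    {H : Type*} [NormedAddCommGroup H] [InnerProductSpace ℂ H] [CompleteSpace H]
    (π : G →* (H ≃ₗᵢ[ℂ] H))
    (φ : H)
    (hadm : ∀ ψ : H, MemLp (fun x => (inner ℂ ψ (π x φ) : ℂ)) 2 μ ∧
      ∫ x, ‖(inner ℂ ψ (π x φ) : ℂ)‖ ^ 2 ∂μ = ‖ψ‖ ^ 2)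
    (Γ : Set G)
    (hframe : ∀ ψ : H, ∑' γ : Γ, ‖(inner ℂ ψ (π (γ : G) φ) : ℂ)‖ ^ 2 = ‖ψ‖ ^ 2) :
    ∀ ψ : H,
      (∀ x : G,
        Summable (fun γ : Γ =>
          ‖(inner ℂ ψ (π (γ : G) φ) : ℂ) * (inner ℂ φ (π ((γ : G)⁻¹ * x) φ) : ℂ)‖) ∧
        ∑' γ : Γ, (inner ℂ ψ (π (γ : G) φ) : ℂ) * (inner ℂ φ (π ((γ : G)⁻¹ * x) φ) : ℂ)
          = (inner ℂ ψ (π x φ) : ℂ)) ∧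
      Tendsto (fun F : Finset Γ =>
          eLpNorm (fun x : G => (inner ℂ ψ (π x φ) : ℂ) -
            ∑ γ ∈ F, (inner ℂ ψ (π (γ : G) φ) : ℂ) * (inner ℂ φ (π ((γ : G)⁻¹ * x) φ) : ℂ))
            2 μ)
        atTop (𝓝 0) := by
  intro ψ
  replace hframe : IsParsevalFrame ℂ fun γ : Γ => π γ φ := hframe
  simp only [inner_apply_inv_mul_apply π φ]
  refine ⟨fun x => ⟨hframe.summable_norm_inner_mul_inner ψ (π x φ),
    (hframe.hasSum_inner_mul_inner ψ (π x φ)).tsum_eq⟩, ?_⟩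
  have hresidual (F : Finset Γ) :
      (fun x => ⟪ψ, π x φ⟫_ℂ - ∑ γ ∈ F, ⟪ψ, π γ φ⟫_ℂ * ⟪π γ φ, π x φ⟫_ℂ) =
        fun x => ⟪ψ - ∑ γ ∈ F, ⟪π γ φ, ψ⟫_ℂ • π γ φ, π x φ⟫_ℂ := by
    funext x
    simp only [inner_sub_left, sum_inner, inner_smul_left, inner_conj_symm]
  have hisometry (v : H) : eLpNorm (fun x => ⟪v, π x φ⟫_ℂ) 2 μ = ENNReal.ofReal ‖v‖ :=
    (hadm v).1.eLpNorm_two_eq_ofReal (norm_nonneg v) (hadm v).2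
  simp only [hresidual, hisometry]
  simpa using ENNReal.tendsto_ofReal
    ((tendsto_const_nhds (x := ψ)).sub (hframe.hasSum_inner_smul ψ)).norm

/-- Reconstruction half of the sampling theorem. Under the same hypotheses as the
isometry half (admissible vector `φ`, countable `Γ ⊆ G` with `(π(γ)φ)_{γ∈Γ}` a Parseval
frame for `H`), for every `ψ ∈ H` the series `∑_{γ∈Γ} W_φψ(γ) · W_φφ(γ⁻¹x)` converges
absolutely to `W_φψ(x)` at every `x ∈ G`, and the reconstruction series converges to
`W_φψ` in the norm of `L²(G,μ)`; thus `W_φ(H)` is a `Γ`-sampling space with sinc-type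
function `W_φφ`. -/
theorem sampling_reconstruction_of_parseval_frame
    {G : Type*} [Group G] [TopologicalSpace G] [IsTopologicalGroup G]
    [LocallyCompactSpace G] [SecondCountableTopology G]
    [MeasurableSpace G] [BorelSpace G]
    (μ : Measure G) [μ.IsHaarMeasure]
    {H : Type*} [NormedAddCommGroup H] [InnerProductSpace ℂ H] [CompleteSpace H]
    [SecondCountableTopology H]
    (π : G →* (H ≃ₗᵢ[ℂ] H))
    (hcont : ∀ v : H, Continuous fun x => π x v)
    (φ : H)
    (hadm : ∀ ψ : H, MemLp (fun x => (inner ℂ ψ (π x φ) : ℂ)) 2 μ ∧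
      ∫ x, ‖(inner ℂ ψ (π x φ) : ℂ)‖ ^ 2 ∂μ = ‖ψ‖ ^ 2)
    (Γ : Set G) (hΓ : Γ.Countable)
    (hframe : ∀ ψ : H, ∑' γ : Γ, ‖(inner ℂ ψ (π (γ : G) φ) : ℂ)‖ ^ 2 = ‖ψ‖ ^ 2) :
    ∀ ψ : H,
      (∀ x : G,
        Summable (fun γ : Γ =>
          ‖(inner ℂ ψ (π (γ : G) φ) : ℂ) * (inner ℂ φ (π ((γ : G)⁻¹ * x) φ) : ℂ)‖) ∧
        ∑' γ : Γ, (inner ℂ ψ (π (γ : G) φ) : ℂ) * (inner ℂ φ (π ((γ : G)⁻¹ * x) φ) : ℂ)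
          = (inner ℂ ψ (π x φ) : ℂ)) ∧
      Tendsto (fun F : Finset Γ =>
          eLpNorm (fun x : G => (inner ℂ ψ (π x φ) : ℂ) -
            ∑ γ ∈ F, (inner ℂ ψ (π (γ : G) φ) : ℂ) * (inner ℂ φ (π ((γ : G)⁻¹ * x) φ) : ℂ))
            2 μ)
        atTop (𝓝 0) :=
  sampling_reconstruction_of_parseval_frame_general μ π φ hadm Γ hframe
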